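/- arXiv:2207.06281 — 6 statements merged into one kernel-verified Lean document; each statement's English description precedes it below -/
import Mathlib

section
/- Let V be a topological vector space over a field k that is linearly compact (every family of closed affine subspaces with empty intersection has a finite subfamily with empty intersection). If V has the discrete topology, then V is finite dimensional over k. -/
open Pointwise

/-!
In a discrete space every affine subspace is closed. If `V` had an infinite basis `(b i)`, the
affine hyperplanes `{x | x_i = 1}` would violate linear compactness: every finite subfamily
indexed by `s` contains `∑ i ∈ s, b i`, while a point of all of them would have infinite support.
-/

namespace Module.Basis

variable {ι R M : Type*} [Ring R] [AddCommGroup M] [Module R M] (b : Basis ι R M)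

theorem mem_vadd_ker_coord_iff (i : ι) (x : M) :
    x ∈ b i +ᵥ (LinearMap.ker (b.coord i) : Set M) ↔ b.repr x i = 1 := by
  rw [Set.mem_vadd_set_iff_neg_vadd_mem, vadd_eq_add, neg_add_eq_sub, SetLike.mem_coe,
    LinearMap.mem_ker, map_sub, coord_apply, coord_apply, repr_self, Finsupp.single_eq_same,
    sub_eq_zero]

theorem iInter_vadd_ker_coord_eq_empty [Nontrivial R] [Infinite ι] :
    ⋂ i, b i +ᵥ (LinearMap.ker (b.coord i) : Set M) = ∅ := by
  refine Set.eq_empty_of_forall_notMem fun x hx => Set.infinite_univ (α := ι) ?_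
  refine (b.repr x).support.finite_toSet.subset fun i _ => Finsupp.mem_support_iff.2 ?_
  rw [(b.mem_vadd_ker_coord_iff i x).1 (Set.mem_iInter.1 hx i)]
  exact one_ne_zero

theorem sum_mem_biInter_vadd_ker_coord (s : Finset ι) :
    ∑ i ∈ s, b i ∈ ⋂ i ∈ s, b i +ᵥ (LinearMap.ker (b.coord i) : Set M) := by
  classical
  simp only [Set.mem_iInter₂, mem_vadd_ker_coord_iff, map_sum, repr_self,
    Finsupp.finsetSum_apply, Finsupp.single_apply]
  intro i hi
  simp [hi]

end Module.Basis

universe u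

theorem FiniteDimensional.of_forall_iInter_vadd_eq_empty {K : Type*} {V : Type u} [DivisionRing K]
    [AddCommGroup V] [Module K V]
    (h : ∀ (ι : Type u) (W : ι → Submodule K V) (v : ι → V),
      ⋂ i, v i +ᵥ (W i : Set V) = ∅ → ∃ s : Finset ι, ⋂ i ∈ s, v i +ᵥ (W i : Set V) = ∅) :
    FiniteDimensional K V := by
  by_contra hfd
  let b := Module.Basis.ofVectorSpace K V
  have : Infinite (Module.Basis.ofVectorSpaceIndex K V) :=
    not_finite_iff_infinite.1 fun _ => hfd (Module.Finite.of_basis b)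
  obtain ⟨s, hs⟩ := h _ _ _ b.iInter_vadd_ker_coord_eq_empty
  exact Set.notMem_empty _ (hs ▸ b.sum_mem_biInter_vadd_ker_coord s)

/-- A linearly compact topological vector space with the discrete topology
is finite dimensional. -/
theorem stmt_0 (k V : Type) [Field k] [AddCommGroup V] [Module k V]
    [TopologicalSpace V] [DiscreteTopology V]
    (hlc : ∀ (ι : Type) (W : ι → Submodule k V) (v : ι → V),
      (∀ i, IsClosed ((v i) +ᵥ (W i : Set V))) →
      (⋂ i, ((v i) +ᵥ (W i : Set V))) = ∅ →
      ∃ s : Finset ι, (⋂ i ∈ s, ((v i) +ᵥ (W i : Set V))) = ∅) :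
    FiniteDimensional k V :=
  FiniteDimensional.of_forall_iInter_vadd_eq_empty fun ι W v =>
    hlc ι W v fun _ => isClosed_discrete _
end

section
/- Let A be a ring and X, Y, Z left ideals of A with Z maximal. If the left A-modules A/X and A/Y have no composition factor isomorphic to A/Z, then (X ∩ Y) + Z = A. -/
/-- Subquotient via a linear map: if `ker f ≤ K` then
`(range f) / (map f K) ≃ N / K`. -/
noncomputable def subquot_equiv_aux {A N M : Type} [Ring A] [AddCommGroup N] [Module A N]
    [AddCommGroup M] [Module A M] (f : N →ₗ[A] M) (K : Submodule A N)
    (hK : LinearMap.ker f ≤ K) :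
    (↥(LinearMap.range f) ⧸
      (Submodule.comap (LinearMap.range f).subtype (K.map f))) ≃ₗ[A] (N ⧸ K) := by
  set P' := Submodule.comap (LinearMap.range f).subtype (K.map f)
  let φ : N →ₗ[A] (↥(LinearMap.range f) ⧸ P') := P'.mkQ.comp f.rangeRestrict
  have hsurj : Function.Surjective φ :=
    (Submodule.mkQ_surjective P').comp f.surjective_rangeRestrict
  have hker : LinearMap.ker φ = K := by
    ext x
    simp only [φ, LinearMap.mem_ker, LinearMap.comp_apply, Submodule.mkQ_apply,
      Submodule.Quotient.mk_eq_zero, Submodule.mem_comap, P', Submodule.subtype_apply,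
      LinearMap.rangeRestrict]
    constructor
    · rintro h
      have : f x ∈ K.map f := h
      obtain ⟨k, hk, hfk⟩ := this
      have : x - k ∈ LinearMap.ker f := by
        simp [LinearMap.mem_ker, map_sub, hfk]
      have hxk : x - k ∈ K := hK this
      simpa using K.add_mem hxk hk
    · intro hx
      exact Submodule.mem_map_of_mem hx
  exact ((Submodule.quotEquivOfEq _ _ hker.symm).trans
    (φ.quotKerEquivOfSurjective hsurj)).symm

/-- If `Z` is a maximal left ideal and neither `A/X` nor `A/Y` has a
subquotient (composition factor) isomorphic to `A/Z`, then `X ∩ Y` and `Z`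
are coprime. -/
theorem stmt_4 (A : Type) [Ring A] (X Y Z : Submodule A A)
    (hZ : IsCoatom Z)
    (hX : ∀ (P Q : Submodule A (A ⧸ X)), P ≤ Q →
      IsEmpty ((↥Q ⧸ (Submodule.comap Q.subtype P)) ≃ₗ[A] (A ⧸ Z)))
    (hY : ∀ (P Q : Submodule A (A ⧸ Y)), P ≤ Q →
      IsEmpty ((↥Q ⧸ (Submodule.comap Q.subtype P)) ≃ₗ[A] (A ⧸ Z))) :
    (X ⊓ Y) ⊔ Z = ⊤ := by
  by_contra h
  -- maximality: X ⊓ Y ≤ Z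
  have hXY : X ⊓ Y ≤ Z := by
    rcases lt_or_eq_of_le (le_sup_right : Z ≤ (X ⊓ Y) ⊔ Z) with hlt | heq
    · exact absurd (hZ.2 _ hlt) h
    · exact sup_le_iff.mp heq.symm.le |>.1
  by_cases hXZ : X ≤ Z
  · -- A/Z is a quotient of A/X
    have e := subquot_equiv_aux X.mkQ Z (by simpa [Submodule.ker_mkQ] using hXZ)
    -- (A ⧸ X) ⧸ image of Z ... compose with: N ⧸ K = A ⧸ Z here N = A, K = Z
    exact (hX (Z.map X.mkQ) (LinearMap.range X.mkQ)
      (LinearMap.map_le_range)).false e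
  · -- X ⊔ Z = ⊤
    have hsup : X ⊔ Z = ⊤ := hZ.2 _ (by
      rcases lt_or_eq_of_le (le_sup_right : Z ≤ X ⊔ Z) with hlt | heq
      · exact hlt
      · exact absurd (sup_le_iff.mp heq.symm.le).1 hXZ) 
    -- f : X → A/Y
    set f : ↥X →ₗ[A] (A ⧸ Y) := Y.mkQ.comp X.subtype with hf
    have hkf : LinearMap.ker f ≤ Submodule.comap X.subtype Z := by
      intro x hx
      have : (x : A) ∈ X ⊓ Y := by
        refine ⟨x.2, ?_⟩
        simpa [hf, Submodule.Quotient.mk_eq_zero] using hx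
      exact hXY this
    have e1 := subquot_equiv_aux f (Submodule.comap X.subtype Z) hkf
    -- X / (X ∩ Z) ≃ A / Z via g : X → A/Z surjective
    set g : ↥X →ₗ[A] (A ⧸ Z) := Z.mkQ.comp X.subtype with hg
    have hgs : Function.Surjective g := by
      intro a
      obtain ⟨a, rfl⟩ := Submodule.mkQ_surjective Z a
      have : a ∈ X ⊔ Z := hsup ▸ Submodule.mem_top
      obtain ⟨x, hx, z, hz, rfl⟩ := Submodule.mem_sup.mp this
      refine ⟨⟨x, hx⟩, ?_⟩
      show Z.mkQ ((⟨x, hx⟩ : ↥X) : A) = Submodule.Quotient.mk (x + z)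
      rw [Submodule.mkQ_apply]
      exact (Submodule.Quotient.eq Z).mpr (by simpa using Z.neg_mem hz)
    have hkg : LinearMap.ker g = Submodule.comap X.subtype Z := by
      ext x
      simp [hg, Submodule.Quotient.mk_eq_zero]
    have e2 : (↥X ⧸ Submodule.comap X.subtype Z) ≃ₗ[A] (A ⧸ Z) :=
      (Submodule.quotEquivOfEq _ _ hkg.symm).trans (g.quotKerEquivOfSurjective hgs)
    exact (hY ((Submodule.comap X.subtype Z).map f) (LinearMap.range f)
      LinearMap.map_le_range).false (e1.trans e2)
end

section
/- Let A be a ring and I₁, …, Iₙ maximal left ideals such that the simple modules A/I₁, …, A/Iₙ are pairwise non-isomorphic. Then the natural map A → A/I₁ × ⋯ × A/Iₙ is surjective. -/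
/-!
If `K ⊓ N ≤ P` for maximal submodules `N`, `P` and a submodule `K` contained in neither,
then `K ⧸ (K ⊓ N) ≅ M ⧸ N` is simple, so `K ⊓ N = K ⊓ P` and
`M ⧸ N ≅ K ⧸ (K ⊓ N) = K ⧸ (K ⊓ P) ≅ M ⧸ P`. With pairwise non-isomorphic quotients this
gives, by induction, `⨅ l ≠ j, I l ⊄ I j`, hence `I j ⊔ ⨅ l ≠ j, I l = ⊤` by maximality,
which is the hypothesis of the Chinese remainder theorem.
-/

namespace Submodule

variable {R M : Type*} [Ring R] [AddCommGroup M] [Module R M]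

theorem sup_eq_top_of_isCoatom_of_not_le {N K : Submodule R M} (hN : IsCoatom N) (hK : ¬K ≤ N) :
    N ⊔ K = ⊤ :=
  hN.lt_iff.mp (left_lt_sup.mpr hK)

noncomputable def quotientComapSubtypeEquivOfSupEqTop {N K : Submodule R M} (h : N ⊔ K = ⊤) :
    (K ⧸ N.comap K.subtype) ≃ₗ[R] M ⧸ N :=
  let f := N.mkQ ∘ₗ K.subtype
  have hf : Function.Surjective f := by
    rw [← LinearMap.range_eq_top, LinearMap.range_comp, range_subtype, map_mkQ_eq_top, h]
  have hker : N.comap K.subtype = LinearMap.ker f := by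
    rw [LinearMap.ker_comp, ker_mkQ]
  (quotEquivOfEq _ _ hker).trans (f.quotKerEquivOfSurjective hf)

theorem nonempty_quotient_linearEquiv_of_inf_le {N P K : Submodule R M} (hN : IsCoatom N)
    (hP : IsCoatom P) (hKP : ¬K ≤ P) (h : K ⊓ N ≤ P) :
    Nonempty ((M ⧸ N) ≃ₗ[R] M ⧸ P) := by
  have hKN : ¬K ≤ N := fun hle => hKP ((inf_eq_left.mpr hle).symm.le.trans h)
  let eN := quotientComapSubtypeEquivOfSupEqTop (sup_eq_top_of_isCoatom_of_not_le hN hKN)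
  let eP := quotientComapSubtypeEquivOfSupEqTop (sup_eq_top_of_isCoatom_of_not_le hP hKP)
  have : IsSimpleModule R (M ⧸ N) := isSimpleModule_iff_isCoatom.mpr hN
  have hcoatom : IsCoatom (N.comap K.subtype) :=
    isSimpleModule_iff_isCoatom.mp (IsSimpleModule.congr eN)
  have hle : N.comap K.subtype ≤ P.comap K.subtype := fun x hx => h ⟨x.2, hx⟩
  have hne : P.comap K.subtype ≠ ⊤ := fun htop =>
    hKP fun x hx => (comap_subtype_eq_top.mp htop) hx
  have heq : N.comap K.subtype = P.comap K.subtype :=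
    ((hcoatom.le_iff.mp hle).resolve_left hne).symm
  exact ⟨eN.symm.trans ((quotEquivOfEq _ _ heq).trans eP)⟩

theorem not_finset_inf_le_of_pairwise_isEmpty_linearEquiv {ι : Type*} {I : ι → Submodule R M}
    (hmax : ∀ j, IsCoatom (I j))
    (hI : Pairwise fun j l => IsEmpty ((M ⧸ I j) ≃ₗ[R] M ⧸ I l))
    {S : Finset ι} {j : ι} (hj : j ∉ S) : ¬S.inf I ≤ I j := by
  classical
  induction S using Finset.induction_on with
  | empty => simpa using (hmax j).1
  | insert k S _ ih =>
    rw [Finset.mem_insert, not_or] at hj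
    have ih := ih hj.2
    rw [Finset.inf_insert, inf_comm]
    intro hle
    by_cases hSk : S.inf I ≤ I k
    · exact ih ((le_inf le_rfl hSk).trans hle)
    · obtain ⟨e⟩ := nonempty_quotient_linearEquiv_of_inf_le (hmax k) (hmax j) ih hle
      exact (hI (Ne.symm hj.1)).false e

theorem surjective_pi_mkQ_of_sup_eq_top {ι : Type*} [Fintype ι] [DecidableEq ι]
    {I : ι → Submodule R M}
    (h : ∀ j, I j ⊔ (Finset.univ.erase j).inf I = ⊤) :
    Function.Surjective (LinearMap.pi fun j => (I j).mkQ) := by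
  rw [← LinearMap.range_eq_top, eq_top_iff]
  rintro b -
  rw [← Finset.univ_sum_single b]
  refine sum_mem fun j _ => ?_
  obtain ⟨x, hx, hxb⟩ : b j ∈ map (I j).mkQ ((Finset.univ.erase j).inf I) := by
    rw [(map_mkQ_eq_top ..).mpr (h j)]; trivial
  refine ⟨x, funext fun l => ?_⟩
  rcases eq_or_ne l j with rfl | hl
  · simpa using hxb
  · rw [Pi.single_eq_of_ne hl, LinearMap.pi_apply, mkQ_apply, Quotient.mk_eq_zero]
    exact Finset.inf_le (f := I) (Finset.mem_erase.mpr ⟨hl, Finset.mem_univ l⟩) hx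

end Submodule

/-- Chinese Remainder Theorem for pairwise non-isomorphic simple quotients:
if `I₁, …, Iₙ` are maximal left ideals with pairwise non-isomorphic simple
quotients, then the natural map `A → A/I₁ × ⋯ × A/Iₙ` is surjective. -/
theorem stmt_5 (A : Type) [Ring A] (n : ℕ) (I : Fin n → Submodule A A)
    (hmax : ∀ j, IsCoatom (I j))
    (hni : ∀ j l, j ≠ l → IsEmpty ((A ⧸ I j) ≃ₗ[A] (A ⧸ I l))) :
    Function.Surjective
      (fun a : A => fun j : Fin n => (Submodule.Quotient.mk a : A ⧸ I j)) :=
  Submodule.surjective_pi_mkQ_of_sup_eq_top fun j =>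
    Submodule.sup_eq_top_of_isCoatom_of_not_le (hmax j)
      (Submodule.not_finset_inf_le_of_pairwise_isEmpty_linearEquiv hmax hni
        (Finset.notMem_erase j _))
end

section
/- Let {A_i, φ_{ij}} be an inverse system of rings with surjective transition maps, and A its inverse limit with surjective projections φ_i : A → A_i. Then the Jacobson radical of A (intersection of maximal open left ideals, where the topology is the inverse limit topology with each A_i finite dimensional and discrete) equals the inverse limit of the Jacobson radicals J(A_i). -/
set_option maxHeartbeats 1000000
set_option synthInstance.maxHeartbeats 200000


/-- For a surjective inverse system of finite dimensional algebras `A_i` with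
inverse limit `A` (realized as a subring of the product, with surjective
projections), the topological Jacobson radical of `A` (the intersection of the
maximal open left ideals) equals the inverse limit of the Jacobson radicals
`J(A_i)`, i.e. the set of elements whose every coordinate lies in the
corresponding `J(A_i)`. -/
theorem stmt_12 (k : Type) [Field k] (ι : Type) [Preorder ι]
    [IsDirected ι (· ≤ ·)]
    (Ai : ι → Type) [∀ i, Ring (Ai i)] [∀ i, Algebra k (Ai i)]
    [∀ i, FiniteDimensional k (Ai i)]
    [∀ i, TopologicalSpace (Ai i)] [∀ i, DiscreteTopology (Ai i)]
    (φ : ∀ i j, i ≤ j → (Ai j →ₐ[k] Ai i))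
    (hφs : ∀ i j (h : i ≤ j), Function.Surjective (φ i j h))
    (hφid : ∀ i (x : Ai i), φ i i le_rfl x = x)
    (hφc : ∀ i j l (hij : i ≤ j) (hjl : j ≤ l) (x : Ai l),
      φ i j hij (φ j l hjl x) = φ i l (hij.trans hjl) x)
    (A : Subring (∀ i, Ai i))
    (hA : (A : Set (∀ i, Ai i)) = {x | ∀ i j (h : i ≤ j), φ i j h (x j) = x i})
    (hAs : ∀ i, Function.Surjective (fun a : A => (a : ∀ i, Ai i) i)) :
    (⋂ M ∈ {M : Submodule A A | IsOpen (M : Set A) ∧ IsCoatom M},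
        (M : Set A)) =
      {a : A | ∀ i, (a : ∀ i, Ai i) i ∈ Ideal.jacobson (⊥ : Ideal (Ai i))} := by
  have πdef : ∀ i : ι, ∃ π : A →+* Ai i, ∀ x : A, π x = (x : ∀ i, Ai i) i :=
    fun i => ⟨(Pi.evalRingHom Ai i).comp A.subtype, fun x => rfl⟩
  ext a
  simp only [Set.mem_iInter, Set.mem_setOf_eq]
  constructor
  · -- forward direction
    intro ha i
    obtain ⟨π, hπ⟩ := πdef i
    rw [Ideal.jacobson, Ideal.mem_sInf]
    rintro m ⟨-, hm⟩
    have hmc : IsCoatom m := Ideal.isMaximal_def.mp hm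
    -- the pullback ideal
    let M : Submodule A A :=
      { carrier := {x : A | π x ∈ m}
        add_mem' := fun {x y} hx hy => by
          show π (x + y) ∈ m
          rw [map_add π x y]
          exact m.add_mem hx hy
        zero_mem' := by
          show π 0 ∈ m
          rw [map_zero π]
          exact m.zero_mem
        smul_mem' := fun r x hx => by
          show π (r • x) ∈ m
          have h2 := m.smul_mem (π r) hx
          rw [smul_eq_mul] at h2 ⊢
          rwa [map_mul π r x] }
    have hMopen : IsOpen (M : Set A) := by
      have hcont : Continuous fun x : A => (x : ∀ i, Ai i) i :=
        (continuous_apply i).comp continuous_subtype_val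
      have : (M : Set A) = (fun x : A => (x : ∀ i, Ai i) i) ⁻¹' (m : Set (Ai i)) := by
        ext x
        simp only [SetLike.mem_coe, Set.mem_preimage]
        show π x ∈ m ↔ _
        rw [hπ]
      rw [this]
      exact (isOpen_discrete _).preimage hcont
    have hMcoatom : IsCoatom M := by
      constructor
      · intro hMtop
        have h1 : (1 : A) ∈ M := hMtop ▸ Submodule.mem_top
        have h1' : π (1 : A) ∈ m := h1
        rw [map_one π] at h1'
        exact hmc.1 (Ideal.eq_top_iff_one m |>.mpr h1')
      · intro N hN
        obtain ⟨x, hxN, hxM⟩ := SetLike.exists_of_lt hN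
        have hπx : π x ∉ m := hxM
        -- m ⊔ span {π x} = ⊤
        have hsup : m ⊔ Ideal.span {π x} = ⊤ := by
          refine hmc.2 _ (lt_of_le_of_ne le_sup_left fun h => hπx ?_)
          have : Ideal.span {π x} ≤ m := by
            rw [h]; exact le_sup_right
          exact this (Ideal.subset_span rfl)
        have h1 : (1 : Ai i) ∈ m ⊔ Ideal.span {π x} := hsup ▸ Submodule.mem_top
        obtain ⟨y, hy, z, hz, hyz⟩ := Submodule.mem_sup.mp h1
        obtain ⟨c, hc⟩ := Submodule.mem_span_singleton.mp hz
        obtain ⟨r, hr⟩ := hAs i c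
        -- 1 - r * x ∈ M ⊆ N
        have h1rx : (1 : A) - r * x ∈ M := by
          show π (1 - r * x) ∈ m
          have : π (1 - r * x) = y := by
            rw [map_sub, map_one, map_mul]
            have hπr : π r = c := by rw [hπ]; exact hr
            rw [hπr]
            have : c * π x = z := by rw [← hc]; rfl
            rw [this, ← hyz]; exact add_sub_cancel_right y z
          rw [this]; exact hy
        have h1N : (1 : A) ∈ N := by
          have hrx : r * x ∈ N := N.smul_mem r hxN
          have := N.add_mem (hN.le h1rx) hrx
          simpa using this
        exact Ideal.eq_top_iff_one N |>.mpr h1N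
    have := ha M ⟨hMopen, hMcoatom⟩
    rw [← hπ a]
    exact this
  · -- reverse direction
    intro ha M hM
    obtain ⟨hMopen, hMcoatom⟩ := hM
    cases isEmpty_or_nonempty ι with
    | inl h =>
      exfalso
      have h0 : ∀ x : A, x = 0 := fun x => Subtype.ext (funext fun i => isEmptyElim i)
      apply hMcoatom.1
      ext x
      simp only [Submodule.mem_top, iff_true]
      rw [h0 x]; exact M.zero_mem
    | inr h =>
      -- find i₀ with ker π_{i₀} ⊆ M
      obtain ⟨V, hVopen, hVM⟩ := isOpen_induced_iff.mp hMopen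
      have h0V : (0 : ∀ i, Ai i) ∈ V := by
        have : ((0 : A) : ∀ i, Ai i) ∈ V := by
          have : (0 : A) ∈ (Subtype.val ⁻¹' V : Set A) := hVM ▸ M.zero_mem
          exact this
        simpa using this
      obtain ⟨F, u, hu, hsub⟩ := isOpen_pi_iff.mp hVopen 0 h0V
      obtain ⟨i₀, hi₀⟩ := F.exists_le
      obtain ⟨π, hπ⟩ := πdef i₀
      have hker : ∀ x : A, π x = 0 → x ∈ M := by
        intro x hx
        have hx2 : (x : ∀ i, Ai i) ∈ (A : Set (∀ i, Ai i)) := x.2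
        rw [hA] at hx2
        have hxj : ∀ j ∈ F, (x : ∀ i, Ai i) j = 0 := by
          intro j hj
          have := hx2 j i₀ (hi₀ j hj)
          rw [hπ] at hx
          rw [← this, hx, map_zero]
        have : (x : ∀ i, Ai i) ∈ (F : Set ι).pi u := by
          intro j hj
          rw [hxj j hj]
          exact (hu j hj).2
        have hxV : (x : ∀ i, Ai i) ∈ V := hsub this
        have : x ∈ (Subtype.val ⁻¹' V : Set A) := hxV
        rw [hVM] at this
        exact this
      -- push forward M to a maximal ideal of Ai i₀
      let m : Ideal (Ai i₀) :=
        { carrier := π '' (M : Set A)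
          add_mem' := fun {b₁ b₂} hb₁ hb₂ => by
            obtain ⟨x₁, hx₁, rfl⟩ := hb₁
            obtain ⟨x₂, hx₂, rfl⟩ := hb₂
            exact ⟨x₁ + x₂, M.add_mem hx₁ hx₂, map_add π x₁ x₂⟩
          zero_mem' := ⟨0, M.zero_mem, map_zero π⟩
          smul_mem' := fun c b hb => by
            obtain ⟨x, hx, rfl⟩ := hb
            obtain ⟨r, hr⟩ := hAs i₀ c
            refine ⟨r * x, M.smul_mem r hx, ?_⟩
            rw [map_mul, smul_eq_mul]
            congr 1
            rw [hπ]; exact hr }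
      have hmmax : m.IsMaximal := by
        rw [Ideal.isMaximal_def]
        constructor
        · intro hmtop
          have h1 : (1 : Ai i₀) ∈ m := hmtop ▸ Submodule.mem_top
          obtain ⟨x, hxM, hx⟩ := h1
          have : (1 : A) - x ∈ M := by
            apply hker
            rw [map_sub, map_one, hx, sub_self]
          have h1M : (1 : A) ∈ M := by
            have := M.add_mem this hxM
            simpa using this
          exact hMcoatom.1 (Ideal.eq_top_iff_one M |>.mpr h1M)
        · intro N hN
          obtain ⟨b, hbN, hbm⟩ := SetLike.exists_of_lt hN
          obtain ⟨x, hx⟩ := hAs i₀ b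
          have hxπ : π x = b := by rw [hπ]; exact hx
          have hxM : x ∉ M := fun hmem => hbm ⟨x, hmem, hxπ⟩
          let N' : Submodule A A :=
            { carrier := {y : A | π y ∈ N}
              add_mem' := fun {y₁ y₂} hy₁ hy₂ => by
                show π (y₁ + y₂) ∈ N
                rw [map_add π y₁ y₂]
                exact N.add_mem hy₁ hy₂
              zero_mem' := by
                show π 0 ∈ N
                rw [map_zero π]
                exact N.zero_mem
              smul_mem' := fun r y hy => by
                show π (r • y) ∈ N
                have h2 := N.smul_mem (π r) hy
                rw [smul_eq_mul] at h2 ⊢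
                rwa [map_mul π r y] }
          have hMN' : M < N' := by
            refine lt_of_le_of_ne (fun y hy => ?_) (fun heq => hxM ?_)
            · show π y ∈ N
              exact hN.le ⟨y, hy, rfl⟩
            · rw [heq]
              show π x ∈ N
              rw [hxπ]; exact hbN
          have hN'top : N' = ⊤ := hMcoatom.2 N' hMN'
          have h1 : (1 : A) ∈ N' := hN'top ▸ Submodule.mem_top
          have : π (1 : A) ∈ N := h1
          rw [map_one] at this
          exact Ideal.eq_top_iff_one N |>.mpr this
      -- now a i₀ ∈ m
      have haM : (a : ∀ i, Ai i) i₀ ∈ m := by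
        have := ha i₀
        rw [Ideal.jacobson] at this
        exact Ideal.mem_sInf.mp this ⟨bot_le, hmmax⟩
      obtain ⟨x, hxM, hx⟩ := haM
      have : a - x ∈ M := by
        apply hker
        rw [map_sub, hx, hπ, sub_self]
      have := M.add_mem this hxM
      simpa using this
end

section
/- Let k be a field and A a k-algebra. If there exists a separability idempotent p ∈ A ⊗_k A (i.e. m(p) = 1 where m is multiplication, and a·p = p·a for all a ∈ A in the bimodule structure a·(b⊗c) = ab⊗c, (b⊗c)·a = b⊗ca), then every derivation d : A → T into an A-bimodule T is inner. -/
open TensorProduct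

/-- If `A` has a separability idempotent `p ∈ A ⊗_k A` (so `m(p) = 1` and
`a·p = p·a` for all `a`), then every derivation `d : A → T` into an
`A`-bimodule `T` is inner. -/
theorem stmt_15 (k A : Type) [Field k] [Ring A] [Algebra k A]
    (T : Type) [AddCommGroup T] [Module k T]
    [Module A T] [Module Aᵐᵒᵖ T] [SMulCommClass A Aᵐᵒᵖ T]
    [IsScalarTower k A T]
    (p : A ⊗[k] A)
    (hm : LinearMap.mul' k A p = 1)
    (hcomm : ∀ a : A,
      LinearMap.rTensor A (LinearMap.mulLeft k a) p =
        LinearMap.lTensor A (LinearMap.mulRight k a) p)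
    (d : A →ₗ[k] T)
    (hd : ∀ a b : A, d (a * b) = a • d b + MulOpposite.op b • d a) :
    ∃ u : T, ∀ a : A, d a = MulOpposite.op a • u - a • u := by
  have hsc : ∀ (c : k) (x : A) (t : T), x • (c • t) = c • (x • t) := by
    intro c x t
    calc x • (c • t) = x • ((c • (1 : A)) • t) := by rw [smul_assoc, one_smul]
      _ = (x * (c • (1 : A))) • t := by rw [mul_smul]
      _ = (c • x) • t := by rw [mul_smul_comm, mul_one]
      _ = c • (x • t) := by rw [smul_assoc]
  let F : A ⊗[k] A →ₗ[k] T := TensorProduct.lift <| LinearMap.mk₂ k (fun x y => x • d y)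
    (fun x x' y => add_smul x x' (d y))
    (fun c x y => smul_assoc c x (d y))
    (fun x y y' => by simp only [map_add, smul_add])
    (fun c x y => by simp only [map_smul]; exact hsc c x (d y))
  have hF : ∀ (x y : A), F (x ⊗ₜ[k] y) = x • d y := fun x y => rfl
  have h1 : ∀ (a : A) (q : A ⊗[k] A),
      F (LinearMap.rTensor A (LinearMap.mulLeft k a) q) = a • F q := by
    intro a q
    induction q using TensorProduct.induction_on with
    | zero => simp
    | tmul x y => simp [hF, mul_smul]
    | add q r hq hr => simp [map_add, hq, hr, smul_add]
  have h2 : ∀ (a : A) (q : A ⊗[k] A),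
      F (LinearMap.lTensor A (LinearMap.mulRight k a) q) =
        (LinearMap.mul' k A q) • d a + MulOpposite.op a • F q := by
    intro a q
    induction q using TensorProduct.induction_on with
    | zero => simp
    | tmul x y =>
        simp only [LinearMap.lTensor_tmul, LinearMap.mulRight_apply, hF, hd y a, smul_add,
          LinearMap.mul'_apply, mul_smul]
        congr 1
        exact smul_comm x (MulOpposite.op a) (d y)
    | add q r hq hr =>
        simp only [map_add, hq, hr, add_smul, smul_add]
        abel
  refine ⟨-(F p), fun a => ?_⟩
  have h := h1 a p
  rw [hcomm a, h2 a p, hm, one_smul] at h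
  -- h : d a + op a • F p = a • F p
  have : d a = a • F p - MulOpposite.op a • F p := by
    rw [← h]; abel
  rw [this, smul_neg, smul_neg]
  abel
end

section
/- Let A be an algebra over a field k with Jacobson radical J, and let s₁, s₂ : A/J → A be two algebra splittings of the projection A → A/J. Suppose the derivation d(x) = s₁(x) − s₂(x), viewed as a map into the A/J-bimodule J with actions x·j = s₁(x)j and j·x = j s₂(x), is inner, i.e. d(x) = x·ω − ω·x for some ω ∈ J. Then 1 − ω is invertible in A and s₁(x) = (1−ω) s₂(x) (1−ω)^{-1} for all x ∈ A/J; in particular the images of s₁ and s₂ are conjugate subalgebras. -/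
private lemma left_inv_of_mem_jac {R : Type} [Ring R] {a : R}
    (ha : a ∈ Ideal.jacobson (⊥ : Ideal R)) : ∃ z : R, z * (1 - a) = 1 := by
  obtain ⟨z, hz⟩ := Ideal.mem_jacobson_iff.1 ha (-1)
  rw [Ideal.mem_bot] at hz
  refine ⟨z, ?_⟩
  have e : z * (1 - a) = z * (-1) * a + z := by noncomm_ring
  rw [e]
  exact sub_eq_zero.mp hz

private lemma isUnit_one_sub_of_mem_jac {R : Type} [Ring R] {a : R}
    (ha : a ∈ Ideal.jacobson (⊥ : Ideal R)) : IsUnit (1 - a) := by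
  obtain ⟨z, hz⟩ := left_inv_of_mem_jac ha
  have hb : (1 - z) ∈ Ideal.jacobson (⊥ : Ideal R) := by
    have e : z * (1 - a) - z = -(z * a) := by noncomm_ring
    rw [hz] at e
    rw [e]
    exact neg_mem (Ideal.mul_mem_left _ _ ha)
  obtain ⟨w, hw⟩ := left_inv_of_mem_jac hb
  have hz' : w * z = 1 := by rwa [sub_sub_cancel] at hw
  have hweq : w = 1 - a :=
    calc w = w * (z * (1 - a)) := by rw [hz, mul_one]
      _ = (w * z) * (1 - a) := by rw [mul_assoc]
      _ = 1 - a := by rw [hz', one_mul]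
  exact ⟨⟨1 - a, z, hweq ▸ hz', hz⟩, rfl⟩


/-- Malcev uniqueness: let `π : A → B` be a surjective algebra map whose kernel
is the Jacobson radical `J` of `A` (so `B` plays the role of `A/J`), and let
`s₁, s₂` be algebra splittings of `π`.  If the derivation `d x = s₁ x - s₂ x`
into the bimodule `J` (actions `x·j = s₁(x) j`, `j·x = j s₂(x)`) is inner,
witnessed by `ω ∈ J`, then `1 - ω` is invertible, `s₁(x)(1-ω) = (1-ω)s₂(x)`
for all `x`, and `s₁ = (1-ω) s₂ (1-ω)⁻¹`, so the images of `s₁` and `s₂` are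
conjugate. -/
theorem stmt_19 (k A B : Type) [Field k] [Ring A] [Algebra k A]
    [Ring B] [Algebra k B]
    (π : A →ₐ[k] B) (hπ : Function.Surjective π)
    (hker : ∀ a : A, π a = 0 ↔ a ∈ Ideal.jacobson (⊥ : Ideal A))
    (s₁ s₂ : B →ₐ[k] A) (hs₁ : ∀ b : B, π (s₁ b) = b)
    (hs₂ : ∀ b : B, π (s₂ b) = b)
    (ω : A) (hω : ω ∈ Ideal.jacobson (⊥ : Ideal A))
    (hinner : ∀ x : B, s₁ x - s₂ x = s₁ x * ω - ω * s₂ x) :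
    IsUnit (1 - ω) ∧
    (∀ x : B, s₁ x * (1 - ω) = (1 - ω) * s₂ x) ∧
    ∃ u : Aˣ, (u : A) = 1 - ω ∧ ∀ x : B, s₁ x = u * s₂ x * (↑u⁻¹ : A) := by
  have hu : IsUnit (1 - ω) := isUnit_one_sub_of_mem_jac hω
  have hcomm : ∀ x : B, s₁ x * (1 - ω) = (1 - ω) * s₂ x := by
    intro x
    have h := hinner x
    rw [mul_sub, mul_one, sub_mul, one_mul]
    exact sub_eq_sub_iff_sub_eq_sub.mpr h
  refine ⟨hu, hcomm, hu.unit, rfl, fun x => ?_⟩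
  have h := hcomm x
  calc s₁ x = s₁ x * (hu.unit * ↑hu.unit⁻¹) := by simp
    _ = (s₁ x * (1 - ω)) * ↑hu.unit⁻¹ := by rw [← mul_assoc]; norm_cast
    _ = ↑hu.unit * s₂ x * ↑hu.unit⁻¹ := by rw [h]; norm_cast
end
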